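/- arXiv:1901.09393 — 6 statements merged into one kernel-verified Lean document; each statement's English description precedes it below -/
import Mathlib

section
/- Let X be a complex Banach space, L ∈ B(X), and M ∈ B(X) a contraction satisfying the spectral gap condition with constant δ < 1. Then there exists ε > 0 such that for all t ∈ [0,ε] the spectrum of M e^{tL} is contained in the union of the open disk of radius (1−δ)/2 centered at 1 and the open disk of radius (1+δ)/2 centered at 0; in particular spec(M e^{tL}) is disjoint from the circle Γ of radius (1−δ)/2 centered at 1 and from the circle γ of radius (1+δ)/2 centered at 0. -/
/-!
The two open disks contain `{1} ∪ closedBall 0 δ ⊇ spec M`, and since their radii add up to the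
distance `1` between their centres, their union misses both circles. The spectrum is upper
hemicontinuous, so `spec N` stays inside this open union for all `N` near `M`, in particular for
`N = M e^{tL}` with `t` small.
-/

open Metric Filter Topology

section Geometry

variable {E : Type*} [PseudoMetricSpace E] {x y : E} {d δ r s : ℝ}

theorem singleton_union_closedBall_subset_ball_union_ball (hδ : δ < d) :
    {x} ∪ closedBall y δ ⊆ ball x ((d - δ) / 2) ∪ ball y ((d + δ) / 2) :=
  Set.union_subset_union (Set.singleton_subset_iff.mpr (mem_ball_self (by linarith)))
    (closedBall_subset_ball (by linarith))

theorem disjoint_ball_union_ball_sphere_left (h : r + s = dist x y) :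
    Disjoint (ball x r ∪ ball y s) (sphere x r) :=
  .union_left sphere_disjoint_ball.symm
    ((closedBall_disjoint_ball (by linarith [dist_comm x y])).symm.mono_right
      sphere_subset_closedBall)

theorem disjoint_ball_union_ball_sphere_right (h : r + s = dist x y) :
    Disjoint (ball x r ∪ ball y s) (sphere y s) := by
  rw [Set.union_comm]
  exact disjoint_ball_union_ball_sphere_left (by rw [dist_comm]; linarith)

end Geometry

theorem tendsto_mul_exp_smul_nhds_zero {𝔸 : Type*} [NormedRing 𝔸] [NormedAlgebra ℂ 𝔸]
    [CompleteSpace 𝔸] (a b : 𝔸) :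
    Tendsto (fun t : ℝ => a * NormedSpace.exp (t • b)) (𝓝 0) (𝓝 a) := by
  have hexp : Continuous (NormedSpace.exp : 𝔸 → 𝔸) :=
    continuous_iff_continuousAt.mpr fun z => (NormedSpace.exp_analytic (𝕂 := ℂ) z).continuousAt
  simpa using ((hexp.comp (continuous_id.smul continuous_const)).tendsto (0 : ℝ)).const_mul a

theorem spectrum_separation_small_times_general
    {X : Type*} [NormedAddCommGroup X] [NormedSpace ℂ X] [CompleteSpace X]
    (M L : X →L[ℂ] X)
    (δ : ℝ) (hδ : δ < 1)
    (hspec : spectrum ℂ M ⊆ {1} ∪ Metric.closedBall (0 : ℂ) δ) :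
    ∃ ε > (0 : ℝ), ∀ t ∈ Set.Icc (0 : ℝ) ε,
      spectrum ℂ (M * NormedSpace.exp (t • L)) ⊆
        Metric.ball (1 : ℂ) ((1 - δ) / 2) ∪ Metric.ball (0 : ℂ) ((1 + δ) / 2) ∧
      Disjoint (spectrum ℂ (M * NormedSpace.exp (t • L)))
        (Metric.sphere (1 : ℂ) ((1 - δ) / 2)) ∧
      Disjoint (spectrum ℂ (M * NormedSpace.exp (t • L)))
        (Metric.sphere (0 : ℂ) ((1 + δ) / 2)) := by
  set U := ball (1 : ℂ) ((1 - δ) / 2) ∪ ball (0 : ℂ) ((1 + δ) / 2)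
  have hradii : (1 - δ) / 2 + (1 + δ) / 2 = dist (1 : ℂ) 0 := by
    rw [dist_zero_right, norm_one]; ring
  have hMU : spectrum ℂ M ⊆ U :=
    hspec.trans (singleton_union_closedBall_subset_ball_union_ball hδ)
  have hnear : ∀ᶠ t : ℝ in 𝓝 0, spectrum ℂ (M * NormedSpace.exp (t • L)) ⊆ U :=
    (tendsto_mul_exp_smul_nhds_zero M L).eventually
      ((upperHemicontinuous_spectrum ℂ _).forall_isOpen M U (isOpen_ball.union isOpen_ball) hMU)
  obtain ⟨ε, hε, hIcc⟩ := mem_nhdsGE_iff_exists_Icc_subset.mp (nhdsWithin_le_nhds hnear)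
  refine ⟨ε, hε, fun t ht => ?_⟩
  have htU : spectrum ℂ (M * NormedSpace.exp (t • L)) ⊆ U := hIcc ht
  exact ⟨htU, (disjoint_ball_union_ball_sphere_left hradii).mono_left htU,
    (disjoint_ball_union_ball_sphere_right hradii).mono_left htU⟩

/-- **Spectral separation persists for small times.**
If `M` is a contraction on a complex Banach space satisfying the spectral gap condition with
constant `δ < 1`, then there is `ε > 0` such that for all `t ∈ [0, ε]` the spectrum of
`M e^{tL}` is contained in the union of the open disk of radius `(1-δ)/2` centered at `1` and
the open disk of radius `(1+δ)/2` centered at `0`; in particular it is disjoint from the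
circles `Γ` (radius `(1-δ)/2` about `1`) and `γ` (radius `(1+δ)/2` about `0`). -/
theorem spectrum_separation_small_times
    {X : Type*} [NormedAddCommGroup X] [NormedSpace ℂ X] [CompleteSpace X]
    (M L : X →L[ℂ] X)
    (hM : ‖M‖ ≤ 1)
    (δ : ℝ) (hδ : δ < 1)
    (h1 : (1 : ℂ) ∈ spectrum ℂ M)
    (hspec : spectrum ℂ M ⊆ {1} ∪ Metric.closedBall (0 : ℂ) δ) :
    ∃ ε > (0 : ℝ), ∀ t ∈ Set.Icc (0 : ℝ) ε,
      spectrum ℂ (M * NormedSpace.exp (t • L)) ⊆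
        Metric.ball (1 : ℂ) ((1 - δ) / 2) ∪ Metric.ball (0 : ℂ) ((1 + δ) / 2) ∧
      Disjoint (spectrum ℂ (M * NormedSpace.exp (t • L)))
        (Metric.sphere (1 : ℂ) ((1 - δ) / 2)) ∧
      Disjoint (spectrum ℂ (M * NormedSpace.exp (t • L)))
        (Metric.sphere (0 : ℂ) ((1 + δ) / 2)) :=
  spectrum_separation_small_times_general M L δ hδ hspec
end

section
/- (Chernoff's √n-Lemma) Let X be a Banach space, C ∈ B(X) a contraction (‖C‖ ≤ 1), and 𝟙 the identity operator on X. Then for all n ∈ ℕ, ‖C^n − e^{n(C−𝟙)}‖ ≤ √n · ‖C − 𝟙‖. -/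
/-!
Let `p_k = e^{-n} n^k / k!` be the Poisson weights of mean `n`. Expanding the exponential,
`e^{n(C - 1)} = e^{-n} e^{nC} = ∑ p_k C^k`, so `Cⁿ - e^{n(C - 1)} = ∑ p_k (Cⁿ - C^k)`.
Since `C` is a contraction, `‖Cⁿ - C^k‖ ≤ |n - k| ‖C - 1‖` by telescoping, and the mean absolute
deviation `∑ p_k |n - k|` of the Poisson distribution is at most its standard deviation `√n`
by Cauchy–Schwarz.
-/

open scoped Nat

theorem exists_hasSum_mul_abs_le_sqrt_mul_sqrt {ι : Type*} {w d : ι → ℝ} {W V : ℝ}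
    (hw : ∀ i, 0 ≤ w i) (hW : HasSum w W) (hV : HasSum (fun i ↦ w i * d i ^ 2) V) :
    ∃ S ≤ √W * √V, HasSum (fun i ↦ w i * |d i|) S := by
  have hW0 : 0 ≤ W := hW.nonneg hw
  have hV0 : 0 ≤ V := hV.nonneg fun i ↦ by have := hw i; positivity
  obtain ⟨S, -, hS, hsum⟩ := Real.inner_le_Lp_mul_Lq_hasSum_of_nonneg Real.HolderConjugate.two_two
    (Real.sqrt_nonneg W) (Real.sqrt_nonneg V) (f := fun i ↦ √(w i))
    (g := fun i ↦ √(w i) * |d i|) (fun i ↦ Real.sqrt_nonneg _) (fun i ↦ by positivity)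
    (by simpa [Real.rpow_two, Real.sq_sqrt (hw _), Real.sq_sqrt hW0] using hW)
    (by simpa [Real.rpow_two, mul_pow, Real.sq_sqrt (hw _), Real.sq_sqrt hV0] using hV)
  refine ⟨S, hS, ?_⟩
  simpa [← mul_assoc, Real.mul_self_sqrt (hw _)] using hsum

noncomputable def poissonWeight (t : ℝ) (k : ℕ) : ℝ := Real.exp (-t) * t ^ k / k !

theorem poissonWeight_nonneg {t : ℝ} (ht : 0 ≤ t) (k : ℕ) : 0 ≤ poissonWeight t k := by
  unfold poissonWeight; positivity

theorem poissonWeight_succ_mul (t : ℝ) (k : ℕ) :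
    poissonWeight t (k + 1) * (k + 1) = t * poissonWeight t k := by
  simp only [poissonWeight, Nat.factorial_succ, Nat.cast_mul, pow_succ]
  field_simp
  push_cast
  ring

theorem hasSum_poissonWeight (t : ℝ) : HasSum (poissonWeight t) 1 := by
  have := (NormedSpace.expSeries_div_hasSum_exp t).mul_left (Real.exp (-t))
  rw [← Real.exp_eq_exp_ℝ, ← Real.exp_add, neg_add_cancel, Real.exp_zero] at this
  have hform : poissonWeight t = fun k ↦ Real.exp (-t) * (t ^ k / k !) := by
    funext k; rw [poissonWeight, mul_div_assoc]
  rwa [hform]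

theorem hasSum_poissonWeight_mul (t : ℝ) : HasSum (fun k ↦ poissonWeight t k * k) t := by
  rw [← hasSum_nat_add_iff' 1]
  simpa [poissonWeight_succ_mul] using (hasSum_poissonWeight t).mul_left t

theorem hasSum_poissonWeight_mul_mul_sub_one (t : ℝ) :
    HasSum (fun k ↦ poissonWeight t k * (k * (k - 1))) (t ^ 2) := by
  have hshift : (fun k : ℕ ↦ poissonWeight t (k + 1) * ((k + 1 : ℕ) * ((k + 1 : ℕ) - 1 : ℝ)))
      = fun k ↦ t * (poissonWeight t k * k) := by
    funext k
    push_cast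
    rw [add_sub_cancel_right, ← mul_assoc, poissonWeight_succ_mul, mul_assoc]
  rw [← hasSum_nat_add_iff' 1, hshift, Finset.sum_range_one]
  simpa [sq] using (hasSum_poissonWeight_mul t).mul_left t

theorem hasSum_poissonWeight_mul_sub_sq (t : ℝ) :
    HasSum (fun k ↦ poissonWeight t k * (k - t) ^ 2) t := by
  convert ((hasSum_poissonWeight_mul_mul_sub_one t).add
    ((hasSum_poissonWeight_mul t).mul_left (1 - 2 * t))).add
    ((hasSum_poissonWeight t).mul_left (t ^ 2)) using 1
  · ext k; ring
  · ring

section PowerBounds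

variable {A : Type*} [SeminormedRing A] {C : A}

theorem norm_pow_mul_le_of_norm_le_one (hC : ‖C‖ ≤ 1) (j : ℕ) (D : A) : ‖C ^ j * D‖ ≤ ‖D‖ := by
  induction j with
  | zero => simp
  | succ j ih =>
    calc ‖C ^ (j + 1) * D‖ = ‖C * (C ^ j * D)‖ := by rw [pow_succ', mul_assoc]
      _ ≤ ‖C‖ * ‖C ^ j * D‖ := norm_mul_le _ _
      _ ≤ 1 * ‖D‖ := by gcongr
      _ = ‖D‖ := one_mul _

theorem norm_pow_add_sub_pow_le (hC : ‖C‖ ≤ 1) (k d : ℕ) :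
    ‖C ^ (k + d) - C ^ k‖ ≤ d * ‖C - 1‖ := by
  induction d with
  | zero => simp
  | succ d ih =>
    have hsplit : C ^ (k + (d + 1)) - C ^ k = C ^ (k + d) * (C - 1) + (C ^ (k + d) - C ^ k) := by
      rw [mul_sub, mul_one, ← pow_succ, add_assoc]; abel
    calc ‖C ^ (k + (d + 1)) - C ^ k‖ ≤ ‖C ^ (k + d) * (C - 1)‖ + ‖C ^ (k + d) - C ^ k‖ := by
          rw [hsplit]; exact norm_add_le _ _
      _ ≤ ‖C - 1‖ + d * ‖C - 1‖ := by gcongr; exact norm_pow_mul_le_of_norm_le_one hC _ _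
      _ = (d + 1 : ℕ) * ‖C - 1‖ := by push_cast; ring

theorem norm_pow_sub_pow_le (hC : ‖C‖ ≤ 1) (m k : ℕ) :
    ‖C ^ m - C ^ k‖ ≤ |(m : ℝ) - k| * ‖C - 1‖ := by
  wlog hkm : k ≤ m generalizing m k
  · rw [norm_sub_rev, abs_sub_comm]; exact this k m (by omega)
  obtain ⟨d, rfl⟩ := Nat.exists_eq_add_of_le hkm
  simpa using norm_pow_add_sub_pow_le hC k d

end PowerBounds

section Exponential

variable {A : Type*} [NormedRing A] [NormedAlgebra ℝ A] [CompleteSpace A]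

theorem NormedSpace.exp_smul_sub_one (t : ℝ) (C : A) :
    NormedSpace.exp (t • (C - 1)) = Real.exp (-t) • NormedSpace.exp (t • C) := by
  have hcomm : Commute (algebraMap ℝ A (-t)) (t • C) := Algebra.commutes _ _
  have hball : ∀ x : A, x ∈ Metric.eball 0 (NormedSpace.expSeries ℝ A).radius := fun x ↦
    (NormedSpace.expSeries_radius_eq_top ℝ A).symm ▸ edist_lt_top _ _
  rw [smul_sub, sub_eq_neg_add, ← Algebra.algebraMap_eq_smul_one, ← map_neg,
    NormedSpace.exp_add_of_commute_of_mem_ball hcomm (hball _) (hball _),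
    ← NormedSpace.algebraMap_exp_comm, ← Real.exp_eq_exp_ℝ,
    Algebra.algebraMap_eq_smul_one, smul_one_mul]

theorem hasSum_poissonWeight_smul_pow (t : ℝ) (C : A) :
    HasSum (fun k ↦ poissonWeight t k • C ^ k) (NormedSpace.exp (t • (C - 1))) := by
  rw [NormedSpace.exp_smul_sub_one]
  convert (NormedSpace.exp_series_hasSum_exp' (𝕂 := ℝ) (t • C)).const_smul
    (Real.exp (-t)) using 2 with k
  rw [smul_pow, smul_smul, smul_smul, poissonWeight]
  ring_nf

theorem norm_pow_sub_exp_smul_sub_one_le {C : A} (hC : ‖C‖ ≤ 1) (n : ℕ) :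
    ‖C ^ n - NormedSpace.exp ((n : ℝ) • (C - 1))‖ ≤ √n * ‖C - 1‖ := by
  have hdiff : HasSum (fun k ↦ poissonWeight n k • (C ^ n - C ^ k))
      (C ^ n - NormedSpace.exp ((n : ℝ) • (C - 1))) := by
    simpa only [smul_sub, one_smul] using
      ((hasSum_poissonWeight n).smul_const (C ^ n)).sub (hasSum_poissonWeight_smul_pow n C)
  obtain ⟨S, hS, hmean⟩ := exists_hasSum_mul_abs_le_sqrt_mul_sqrt
    (poissonWeight_nonneg n.cast_nonneg) (hasSum_poissonWeight n)
    (hasSum_poissonWeight_mul_sub_sq n)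
  calc ‖C ^ n - NormedSpace.exp ((n : ℝ) • (C - 1))‖ ≤ S * ‖C - 1‖ := by
        refine hdiff.norm_le_of_bounded (hmean.mul_right _) fun k ↦ ?_
        rw [norm_smul, Real.norm_of_nonneg (poissonWeight_nonneg n.cast_nonneg k), mul_assoc,
          abs_sub_comm]
        exact mul_le_mul_of_nonneg_left (norm_pow_sub_pow_le hC n k)
          (poissonWeight_nonneg n.cast_nonneg k)
    _ ≤ √n * ‖C - 1‖ := by
        gcongr
        simpa using hS

end Exponential

/-- **Chernoff's `√n`-Lemma.**
For a contraction `C` on a Banach space `X`, `‖Cⁿ − e^{n(C − 𝟙)}‖ ≤ √n ‖C − 𝟙‖` for all `n`. -/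
theorem chernoff_sqrt_n_lemma
    {X : Type*} [NormedAddCommGroup X] [NormedSpace ℝ X] [CompleteSpace X]
    (C : X →L[ℝ] X) (hC : ‖C‖ ≤ 1) (n : ℕ) :
    ‖C ^ n - NormedSpace.exp ((n : ℝ) • (C - 1))‖ ≤ Real.sqrt n * ‖C - 1‖ :=
  norm_pow_sub_exp_smul_sub_one_le hC n
end

section
/- Let X be a Banach space, (C_n)_{n∈ℕ} a sequence of contractions in B(X), and G ∈ B(X) such that ‖n(C_n − 𝟙) − G‖ → 0 as n → ∞, where 𝟙 is the identity operator. Then ‖C_n^n − e^{G}‖ → 0 as n → ∞. -/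
/-!
Put `Aₙ = n • (Cₙ - 1)`. Since `e^(C - 1) = e⁻¹ • e^C` is again a contraction and
`e^Aₙ = (e^(Cₙ - 1))ⁿ`, telescoping `Cₙⁿ - (e^(Cₙ - 1))ⁿ` gives
`‖Cₙⁿ - e^Aₙ‖ ≤ n ‖Cₙ - e^(Cₙ - 1)‖ ≤ n e² ‖Cₙ - 1‖² = e² ‖Aₙ‖² / n → 0`,
while `e^Aₙ → e^G` by continuity of the exponential.
-/

open NormedSpace Filter Topology
open scoped Nat

lemma Real.hasSum_pow_div_factorial (r : ℝ) : HasSum (fun n : ℕ => r ^ n / n !) (Real.exp r) := by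
  rw [Real.exp_eq_exp_ℝ]
  exact expSeries_div_hasSum_exp r

section NormedRing

variable {A : Type*} [NormedRing A]

lemma norm_pow_le_of_norm_one_le (h1 : ‖(1 : A)‖ ≤ 1) (x : A) (n : ℕ) : ‖x ^ n‖ ≤ ‖x‖ ^ n := by
  rcases n.eq_zero_or_pos with rfl | hn
  · simpa using h1
  · exact norm_pow_le' x hn

lemma norm_pow_sub_pow_le_s5 (h1 : ‖(1 : A)‖ ≤ 1) {S T : A} (hS : ‖S‖ ≤ 1) (hT : ‖T‖ ≤ 1) (n : ℕ) :
    ‖S ^ n - T ^ n‖ ≤ n * ‖S - T‖ := by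
  induction n with
  | zero => simp
  | succ n ih =>
    have hSn : ‖S ^ n‖ ≤ 1 :=
      (norm_pow_le_of_norm_one_le h1 S n).trans (pow_le_one₀ (norm_nonneg _) hS)
    calc ‖S ^ (n + 1) - T ^ (n + 1)‖ = ‖(S ^ n - T ^ n) * T + S ^ n * (S - T)‖ := by
          congr 1; noncomm_ring
      _ ≤ ‖S ^ n - T ^ n‖ * ‖T‖ + ‖S ^ n‖ * ‖S - T‖ :=
          norm_add_le_of_le (norm_mul_le _ _) (norm_mul_le _ _)
      _ ≤ n * ‖S - T‖ * 1 + 1 * ‖S - T‖ := by gcongr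
      _ = (n + 1 : ℕ) * ‖S - T‖ := by push_cast; ring

end NormedRing

section BanachAlgebra

variable {A : Type*} [NormedRing A] [NormedAlgebra ℝ A] [CompleteSpace A]

lemma norm_exp_le_exp_norm (h1 : ‖(1 : A)‖ ≤ 1) (x : A) : ‖exp x‖ ≤ Real.exp ‖x‖ := by
  refine (exp_series_hasSum_exp' (𝕂 := ℝ) x).norm_le_of_bounded
    (Real.hasSum_pow_div_factorial ‖x‖) fun n => ?_
  rw [norm_smul, norm_inv, Real.norm_natCast, inv_mul_eq_div]
  gcongr
  exact norm_pow_le_of_norm_one_le h1 x n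

lemma norm_exp_sub_one_sub_le (x : A) : ‖exp x - 1 - x‖ ≤ ‖x‖ ^ 2 * Real.exp ‖x‖ := by
  have htail : HasSum (fun n : ℕ => ((n + 2)! : ℝ)⁻¹ • x ^ (n + 2)) (exp x - 1 - x) := by
    simpa [Finset.sum_range_succ, sub_sub] using
      (hasSum_nat_add_iff' 2).mpr (exp_series_hasSum_exp' (𝕂 := ℝ) x)
  refine htail.norm_le_of_bounded ((Real.hasSum_pow_div_factorial ‖x‖).mul_left _) fun n => ?_
  rw [norm_smul, norm_inv, Real.norm_natCast, inv_mul_eq_div]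
  calc ‖x ^ (n + 2)‖ / (n + 2)! ≤ ‖x‖ ^ (n + 2) / n ! := by
        gcongr
        · exact norm_pow_le' x (by omega)
        · omega
    _ = ‖x‖ ^ 2 * (‖x‖ ^ n / n !) := by ring

lemma norm_exp_sub_one_le_one (h1 : ‖(1 : A)‖ ≤ 1) {S : A} (hS : ‖S‖ ≤ 1) :
    ‖exp (S - 1)‖ ≤ 1 := by
  let +nondep : NormedAlgebra ℚ A := .restrictScalars ℚ ℝ A
  have hexp : exp (S - 1) = Real.exp (-1) • exp S := by
    rw [sub_eq_add_neg, exp_add_of_commute (Commute.one_right S).neg_right,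
      ← map_one (algebraMap ℝ A), ← map_neg, ← algebraMap_exp_comm, ← Real.exp_eq_exp_ℝ,
      ← Algebra.commutes, ← Algebra.smul_def]
  calc ‖exp (S - 1)‖ = Real.exp (-1) * ‖exp S‖ := by
        rw [hexp, norm_smul, Real.norm_eq_abs, Real.abs_exp]
    _ ≤ Real.exp (-1) * Real.exp 1 := by
        gcongr
        exact (norm_exp_le_exp_norm h1 S).trans (Real.exp_le_exp.mpr hS)
    _ = 1 := by rw [← Real.exp_add]; simp

lemma norm_pow_sub_exp_smul_sub_one_le_s5 (h1 : ‖(1 : A)‖ ≤ 1) {S : A} (hS : ‖S‖ ≤ 1) (n : ℕ) :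
    ‖S ^ n - exp ((n : ℝ) • (S - 1))‖ ≤ ‖(n : ℝ) • (S - 1)‖ ^ 2 * Real.exp 2 / n := by
  let +nondep : NormedAlgebra ℚ A := .restrictScalars ℚ ℝ A
  have hstep : ‖S - exp (S - 1)‖ ≤ ‖S - 1‖ ^ 2 * Real.exp 2 := by
    have hS1 : ‖S - 1‖ ≤ 2 := (norm_sub_le _ _).trans (by linarith)
    rw [← norm_neg, show -(S - exp (S - 1)) = exp (S - 1) - 1 - (S - 1) by abel]
    exact (norm_exp_sub_one_sub_le _).trans (by gcongr)
  calc ‖S ^ n - exp ((n : ℝ) • (S - 1))‖ = ‖S ^ n - exp (S - 1) ^ n‖ := by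
        rw [Nat.cast_smul_eq_nsmul, exp_nsmul]
    _ ≤ n * ‖S - exp (S - 1)‖ := norm_pow_sub_pow_le_s5 h1 hS (norm_exp_sub_one_le_one h1 hS) n
    _ ≤ n * (‖S - 1‖ ^ 2 * Real.exp 2) := by gcongr
    _ = ‖(n : ℝ) • (S - 1)‖ ^ 2 * Real.exp 2 / n := by
        rw [norm_smul, Real.norm_natCast]
        rcases eq_or_ne (n : ℝ) 0 with hn | hn
        · simp [hn]
        · field_simp

theorem tendsto_pow_exp_of_tendsto_smul_sub_one (h1 : ‖(1 : A)‖ ≤ 1) {C : ℕ → A}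
    (hC : ∀ n, ‖C n‖ ≤ 1) {G : A} (hG : Tendsto (fun n : ℕ => (n : ℝ) • (C n - 1)) atTop (𝓝 G)) :
    Tendsto (fun n => C n ^ n) atTop (𝓝 (exp G)) := by
  let +nondep : NormedAlgebra ℚ A := .restrictScalars ℚ ℝ A
  have hgap : Tendsto (fun n => C n ^ n - exp ((n : ℝ) • (C n - 1))) atTop (𝓝 0) :=
    squeeze_zero_norm (fun n => norm_pow_sub_exp_smul_sub_one_le_s5 h1 (hC n) n)
      (((hG.norm.pow 2).mul_const _).div_atTop tendsto_natCast_atTop_atTop)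
  simpa using hgap.add hG.exp

end BanachAlgebra

/-- **Chernoff-type convergence.**
If `(Cₙ)` is a sequence of contractions on a Banach space and `‖n(Cₙ − 𝟙) − G‖ → 0` for a
bounded operator `G`, then `‖Cₙⁿ − e^G‖ → 0`. -/
theorem chernoff_convergence
    {X : Type*} [NormedAddCommGroup X] [NormedSpace ℝ X] [CompleteSpace X]
    (C : ℕ → X →L[ℝ] X) (hC : ∀ n, ‖C n‖ ≤ 1) (G : X →L[ℝ] X)
    (h : Filter.Tendsto (fun n : ℕ => ‖(n : ℝ) • (C n - 1) - G‖) Filter.atTop (nhds 0)) :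
    Filter.Tendsto (fun n : ℕ => ‖(C n) ^ n - NormedSpace.exp G‖) Filter.atTop (nhds 0) :=
  tendsto_iff_norm_sub_tendsto_zero.mp <|
    tendsto_pow_exp_of_tendsto_smul_sub_one ContinuousLinearMap.norm_id_le hC
      (tendsto_iff_norm_sub_tendsto_zero.mpr h)
end

section
/- Let X be a Banach space, t ↦ L_t an L-Lipschitz map from [0,τ] into B(X), and T_{[t,s]} a propagator for the family (L_t). Then for all s, t and δ ≥ 0 in the relevant range, ‖T_{[t+δ,t]} − e^{δ L_s}‖ ≤ L·(δ·|t−s| + δ²/2), provided also that ‖e^{r L_s}‖ ≤ 1 for all r ≥ 0 and all s. -/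
/-!
Differentiate `u ↦ T (t + δ) u * exp ((u - t) • A s)` on `[t, t + δ]`: its derivative is
`T (t + δ) u * (A s - A u) * exp ((u - t) • A s)`, of norm at most `L (|t - s| + (u - t))`
because both outer factors are contractions. The mean-value fencing inequality against the
primitive `L (|t - s| (u - t) + (u - t)² / 2)` then bounds the difference of the endpoint values
`T (t + δ) t` and `exp (δ • A s)`.
-/

open Set NormedSpace

section Duhamel

variable {𝔸 : Type*} [NormedRing 𝔸] [NormedAlgebra ℝ 𝔸] [CompleteSpace 𝔸]

theorem hasDerivAt_exp_sub_smul (a : 𝔸) (t u : ℝ) :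
    HasDerivAt (fun v : ℝ => exp ((v - t) • a)) (a * exp ((u - t) • a)) u :=
  HasDerivAt.comp_sub_const u t (hasDerivAt_exp_smul_const' a (u - t))

theorem HasDerivWithinAt.mul_exp_sub_smul {P A : ℝ → 𝔸} {a : 𝔸} {s : Set ℝ} {t u : ℝ}
    (hP : HasDerivWithinAt P (-(P u * A u)) s u) :
    HasDerivWithinAt (fun v => P v * NormedSpace.exp ((v - t) • a))
      (P u * (a - A u) * NormedSpace.exp ((u - t) • a)) s u := by
  refine (hP.mul (hasDerivAt_exp_sub_smul a t u).hasDerivWithinAt).congr_deriv ?_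
  simp only [mul_sub, sub_mul, neg_mul, mul_assoc]
  abel

theorem norm_sub_exp_smul_le {P A : ℝ → 𝔸} {a : 𝔸} {t δ K c : ℝ} (hδ : 0 ≤ δ)
    (hP : ∀ u ∈ Icc t (t + δ), HasDerivWithinAt P (-(P u * A u)) (Icc t (t + δ)) u)
    (hP_end : P (t + δ) = 1) (hP_norm : ∀ u ∈ Ico t (t + δ), ‖P u‖ ≤ 1)
    (hexp_norm : ∀ r ∈ Ico 0 δ, ‖exp (r • a)‖ ≤ 1)
    (hA : ∀ u ∈ Ico t (t + δ), ‖a - A u‖ ≤ K * (c + (u - t))) :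
    ‖P t - exp (δ • a)‖ ≤ K * (δ * c + δ ^ 2 / 2) := by
  set f : ℝ → 𝔸 := fun u => P u * exp ((u - t) • a) - P t
  have hf : ∀ u ∈ Icc t (t + δ), HasDerivWithinAt f
      (P u * (a - A u) * exp ((u - t) • a)) (Icc t (t + δ)) u :=
    fun u hu => (hP u hu).mul_exp_sub_smul.sub_const _
  have hbound : ∀ u ∈ Ico t (t + δ),
      ‖P u * (a - A u) * exp ((u - t) • a)‖ ≤ K * (c + (u - t)) := fun u hu =>
    calc _ ≤ ‖P u‖ * ‖a - A u‖ * ‖exp ((u - t) • a)‖ := norm_mul₃_le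
      _ ≤ 1 * ‖a - A u‖ * 1 := by
          gcongr
          exacts [hP_norm u hu, hexp_norm _ ⟨by linarith [hu.1], by linarith [hu.2]⟩]
      _ ≤ K * (c + (u - t)) := by simpa using hA u hu
  have hboundary : ∀ u, HasDerivAt (fun v => K * (c * (v - t) + (v - t) ^ 2 / 2))
      (K * (c + (u - t))) u := fun u => by
    have hshift := (hasDerivAt_id u).sub_const t
    exact (((hshift.const_mul c).add ((hshift.pow 2).div_const 2)).const_mul K).congr_deriv
      (by simp)
  have key := image_norm_le_of_norm_deriv_right_le_deriv_boundary
    (fun u hu => (hf u hu).continuousWithinAt)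
    (fun u hu => (hf u (Ico_subset_Icc_self hu)).mono_of_mem_nhdsWithin
      (Icc_mem_nhdsGE_of_mem hu))
    (by simp [f]) hboundary hbound (right_mem_Icc.2 (by linarith))
  rw [norm_sub_rev]
  simpa [f, hP_end, mul_comm δ c] using key

end Duhamel

theorem nonneg_of_norm_sub_le_mul_abs {E : Type*} [SeminormedAddCommGroup E] {f : ℝ → E}
    {L x y : ℝ} (hxy : x ≠ y) (h : ‖f x - f y‖ ≤ L * |x - y|) : 0 ≤ L :=
  nonneg_of_mul_nonneg_left ((norm_nonneg _).trans h) (abs_pos.2 (sub_ne_zero.2 hxy))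

theorem propagator_piecewise_constant_approx_general
    {X : Type*} [NormedAddCommGroup X] [NormedSpace ℝ X] [CompleteSpace X]
    (τ : ℝ)
    (L : ℝ) (A : ℝ → X →L[ℝ] X)
    (hLip : ∀ t ∈ Set.Icc (0 : ℝ) τ, ∀ s ∈ Set.Icc (0 : ℝ) τ, ‖A t - A s‖ ≤ L * |t - s|)
    (hcontr : ∀ s ∈ Set.Icc (0 : ℝ) τ, ∀ r : ℝ, 0 ≤ r → ‖NormedSpace.exp (r • A s)‖ ≤ 1)
    (T : ℝ → ℝ → X →L[ℝ] X)
    (hTnorm : ∀ s t : ℝ, 0 ≤ s → s ≤ t → t ≤ τ → ‖T t s‖ ≤ 1)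
    (hTid : ∀ t ∈ Set.Icc (0 : ℝ) τ, T t t = 1)
    (hTderiv : ∀ t ∈ Set.Icc (0 : ℝ) τ, ∀ s ∈ Set.Icc (0 : ℝ) t,
      HasDerivWithinAt (fun u => T t u) (-(T t s * A s)) (Set.Icc (0 : ℝ) t) s) :
    ∀ s ∈ Set.Icc (0 : ℝ) τ, ∀ t δ : ℝ, 0 ≤ t → 0 ≤ δ → t + δ ≤ τ →
      ‖T (t + δ) t - NormedSpace.exp (δ • A s)‖ ≤ L * (δ * |t - s| + δ ^ 2 / 2) := by
  intro s hs t δ ht hδ htδ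
  have hend : t + δ ∈ Icc 0 τ := ⟨by linarith, htδ⟩
  have hmem : ∀ u ∈ Ico t (t + δ), u ∈ Icc 0 τ := fun u hu =>
    ⟨by linarith [hu.1], by linarith [hu.2]⟩
  have hLip_shift : ∀ u ∈ Ico t (t + δ), ‖A s - A u‖ ≤ L * (|t - s| + (u - t)) := fun u hu => by
    have hL : 0 ≤ L := nonneg_of_norm_sub_le_mul_abs hu.2.ne (hLip u (hmem u hu) _ hend)
    calc ‖A s - A u‖ ≤ L * |s - u| := hLip s hs u (hmem u hu)
      _ ≤ L * (|t - s| + (u - t)) := by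
        gcongr
        linarith [abs_sub_le s t u, abs_sub_comm s t, abs_of_nonpos (sub_nonpos.2 hu.1)]
  exact norm_sub_exp_smul_le hδ
    (fun u hu => (hTderiv _ hend u ⟨by linarith [hu.1], hu.2⟩).mono (Icc_subset_Icc ht le_rfl))
    (hTid _ hend) (fun u hu => hTnorm u _ (hmem u hu).1 hu.2.le htδ)
    (fun r hr => hcontr s hs r hr.1) hLip_shift

/-- **Piecewise-constant approximation of a time-dependent evolution (Lemma 4).**
If `t ↦ A t` is an `L`-Lipschitz family of bounded generators of contraction semigroups on
`[0, τ]` and `T t s` is a propagator for this family, then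
`‖T (t+δ) t − e^{δ A s}‖ ≤ L (δ |t − s| + δ²/2)`. -/
theorem propagator_piecewise_constant_approx
    {X : Type*} [NormedAddCommGroup X] [NormedSpace ℝ X] [CompleteSpace X]
    (τ : ℝ) (hτ : 0 ≤ τ)
    (L : ℝ) (A : ℝ → X →L[ℝ] X)
    (hLip : ∀ t ∈ Set.Icc (0 : ℝ) τ, ∀ s ∈ Set.Icc (0 : ℝ) τ, ‖A t - A s‖ ≤ L * |t - s|)
    (hcontr : ∀ s ∈ Set.Icc (0 : ℝ) τ, ∀ r : ℝ, 0 ≤ r → ‖NormedSpace.exp (r • A s)‖ ≤ 1)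
    (T : ℝ → ℝ → X →L[ℝ] X)
    (hTnorm : ∀ s t : ℝ, 0 ≤ s → s ≤ t → t ≤ τ → ‖T t s‖ ≤ 1)
    (hTid : ∀ t ∈ Set.Icc (0 : ℝ) τ, T t t = 1)
    (hTcomp : ∀ s r t : ℝ, 0 ≤ s → s ≤ r → r ≤ t → t ≤ τ → T t r * T r s = T t s)
    (hTderiv : ∀ t ∈ Set.Icc (0 : ℝ) τ, ∀ s ∈ Set.Icc (0 : ℝ) t,
      HasDerivWithinAt (fun u => T t u) (-(T t s * A s)) (Set.Icc (0 : ℝ) t) s) :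
    ∀ s ∈ Set.Icc (0 : ℝ) τ, ∀ t δ : ℝ, 0 ≤ t → 0 ≤ δ → t + δ ≤ τ →
      ‖T (t + δ) t - NormedSpace.exp (δ • A s)‖ ≤ L * (δ * |t - s| + δ ^ 2 / 2) :=
  propagator_piecewise_constant_approx_general τ L A hLip hcontr T hTnorm hTid hTderiv
end

section
/- Let X be a Banach space, t ↦ L_t an L-Lipschitz map from [0,1] into B(X) with ‖e^{r L_s}‖ ≤ 1 for all r ≥ 0 and s ∈ [0,1], T_{[t,s]} a propagator for (L_t), and M ∈ B(X) a contraction. For n ≥ m ≥ 1 define θ(i) := (1/m)·⌈i m / n⌉ for i ∈ {1,…,n}. Then the time-ordered products satisfy ‖∏_{i=1}^{n} M T_{[i/n,(i−1)/n]} − ∏_{i=1}^{n} M e^{(1/n) L_{θ(i)}}‖ ≤ 3L/m. -/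
/-!
On the `i`-th step of the grid `s = (i-1)/n ≤ t = i/n ≤ θ = θ(i)` compare the propagator with the
frozen semigroup by differentiating `u ↦ T_{[t,u]} e^{(u-s) L_θ}`: the derivative is
`T_{[t,u]} (L_θ - L_u) e^{(u-s) L_θ}`, of norm at most `L (θ - s) ≤ 2L/m` since all factors are
contractions. Hence each step is off by at most `2L/(mn)`, and because every factor of both products
is a contraction the errors of the `n` steps add up, to `2L/m`.
-/

/-- The time-ordered product `f n * f (n-1) * ⋯ * f 1` of operators
(composition in the order of increasing index, later times acting last). -/
noncomputable def timeOrderedProd {X : Type*} [NormedAddCommGroup X] [NormedSpace ℝ X]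
    (f : ℕ → X →L[ℝ] X) : ℕ → X →L[ℝ] X
  | 0 => 1
  | n + 1 => f (n + 1) * timeOrderedProd f n

open Set NormedSpace

section TimeOrderedProd

variable {X : Type*} [NormedAddCommGroup X] [NormedSpace ℝ X] {f g : ℕ → X →L[ℝ] X} {n : ℕ}

theorem norm_timeOrderedProd_le_one (hf : ∀ i, 1 ≤ i → i ≤ n → ‖f i‖ ≤ 1) :
    ‖timeOrderedProd f n‖ ≤ 1 := by
  induction n with
  | zero => exact ContinuousLinearMap.norm_id_le
  | succ n ih =>
    exact (norm_mul_le _ _).trans <|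
      mul_le_one₀ (hf _ (Nat.le_add_left 1 n) le_rfl) (norm_nonneg _) (ih fun i hi hin => hf i hi (Nat.le_succ_of_le hin))

theorem norm_timeOrderedProd_sub_le {ε : ℝ} (hf : ∀ i, 1 ≤ i → i ≤ n → ‖f i‖ ≤ 1)
    (hg : ∀ i, 1 ≤ i → i ≤ n → ‖g i‖ ≤ 1) (hfg : ∀ i, 1 ≤ i → i ≤ n → ‖f i - g i‖ ≤ ε) :
    ‖timeOrderedProd f n - timeOrderedProd g n‖ ≤ n * ε := by
  induction n with
  | zero => simp [timeOrderedProd]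
  | succ n ih =>
    have ih := ih (fun i hi hin => hf i hi (Nat.le_succ_of_le hin))
      (fun i hi hin => hg i hi (Nat.le_succ_of_le hin)) (fun i hi hin => hfg i hi (Nat.le_succ_of_le hin))
    have hg_prod := norm_timeOrderedProd_le_one fun i hi hin => hg i hi (Nat.le_succ_of_le hin)
    have hf_last := hf _ (Nat.le_add_left 1 n) le_rfl
    have hfg_last := hfg _ (Nat.le_add_left 1 n) le_rfl
    have telescope : timeOrderedProd f (n + 1) - timeOrderedProd g (n + 1) =
        f (n + 1) * (timeOrderedProd f n - timeOrderedProd g n) +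
          (f (n + 1) - g (n + 1)) * timeOrderedProd g n := by
      simp only [timeOrderedProd, mul_sub, sub_mul]; abel
    rw [telescope, Nat.cast_succ, add_one_mul]
    refine (norm_add_le _ _).trans (add_le_add ?_ ?_)
    · exact (norm_mul_le _ _).trans (mul_le_of_le_one_left (norm_nonneg _) hf_last |>.trans ih)
    · exact (norm_mul_le _ _).trans
        (mul_le_of_le_one_right (norm_nonneg _) hg_prod |>.trans hfg_last)

end TimeOrderedProd

theorem norm_sub_exp_smul_le_of_hasDerivWithinAt {𝔸 : Type*} [NormedRing 𝔸] [NormedAlgebra ℝ 𝔸]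
    [CompleteSpace 𝔸] {U A : ℝ → 𝔸} {B : 𝔸} {s t K : ℝ} (hst : s ≤ t)
    (hU : ∀ u ∈ Icc s t, HasDerivWithinAt U (-(U u * A u)) (Icc s t) u) (hUt : U t = 1)
    (hU_le : ∀ u ∈ Icc s t, ‖U u‖ ≤ 1) (hexp_le : ∀ r ∈ Icc 0 (t - s), ‖exp (r • B)‖ ≤ 1)
    (hAB : ∀ u ∈ Icc s t, ‖B - A u‖ ≤ K) :
    ‖U s - exp ((t - s) • B)‖ ≤ K * (t - s) := by
  set E : ℝ → 𝔸 := fun u => exp ((u - s) • B)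
  have hE : ∀ u, HasDerivAt E (B * E u) u := fun u =>
    (hasDerivAt_exp_smul_const' B (u - s)).comp_sub_const u s
  have hderiv : ∀ u ∈ Icc s t,
      HasDerivWithinAt (fun u => U u * E u) (U u * (B - A u) * E u) (Icc s t) u := fun u hu =>
    ((hU u hu).mul (hE u).hasDerivWithinAt).congr_deriv (by noncomm_ring)
  have hbound : ∀ u ∈ Ico s t, ‖U u * (B - A u) * E u‖ ≤ K := fun u hu => by
    have hu := Ico_subset_Icc_self hu
    have hE_le : ‖E u‖ ≤ 1 := hexp_le _ ⟨sub_nonneg.2 hu.1, sub_le_sub_right hu.2 s⟩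
    calc ‖U u * (B - A u) * E u‖ ≤ ‖U u * (B - A u)‖ :=
          (norm_mul_le _ _).trans (mul_le_of_le_one_right (norm_nonneg _) hE_le)
      _ ≤ ‖B - A u‖ := (norm_mul_le _ _).trans (mul_le_of_le_one_left (norm_nonneg _) (hU_le u hu))
      _ ≤ K := hAB u hu
  have := norm_image_sub_le_of_norm_deriv_le_segment' hderiv hbound t (right_mem_Icc.2 hst)
  simpa [E, hUt, norm_sub_rev] using this

section Propagator

variable {𝔸 : Type*} [NormedRing 𝔸] [NormedAlgebra ℝ 𝔸] [CompleteSpace 𝔸]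

theorem norm_propagator_sub_exp_le {L : ℝ} (hL : 0 ≤ L) {A : ℝ → 𝔸}
    (hLip : ∀ t ∈ Set.Icc (0 : ℝ) 1, ∀ s ∈ Set.Icc (0 : ℝ) 1, ‖A t - A s‖ ≤ L * |t - s|)
    (hcontr : ∀ s ∈ Set.Icc (0 : ℝ) 1, ∀ r : ℝ, 0 ≤ r → ‖NormedSpace.exp (r • A s)‖ ≤ 1)
    {T : ℝ → ℝ → 𝔸}
    (hTnorm : ∀ s t : ℝ, 0 ≤ s → s ≤ t → t ≤ 1 → ‖T t s‖ ≤ 1)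
    (hTid : ∀ t ∈ Set.Icc (0 : ℝ) 1, T t t = 1)
    (hTderiv : ∀ t ∈ Set.Icc (0 : ℝ) 1, ∀ s ∈ Set.Icc (0 : ℝ) t,
      HasDerivWithinAt (fun u => T t u) (-(T t s * A s)) (Set.Icc (0 : ℝ) t) s)
    {s t θ : ℝ} (hs : 0 ≤ s) (hst : s ≤ t) (htθ : t ≤ θ) (hθ : θ ≤ 1) :
    ‖T t s - exp ((t - s) • A θ)‖ ≤ L * (θ - s) * (t - s) := by
  have ht : t ∈ Icc (0 : ℝ) 1 := ⟨hs.trans hst, htθ.trans hθ⟩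
  have hθ' : θ ∈ Icc (0 : ℝ) 1 := ⟨ht.1.trans htθ, hθ⟩
  refine norm_sub_exp_smul_le_of_hasDerivWithinAt hst
    (fun u hu => (hTderiv t ht u ⟨hs.trans hu.1, hu.2⟩).mono (Icc_subset_Icc_left hs))
    (hTid t ht) (fun u hu => hTnorm u t (hs.trans hu.1) hu.2 ht.2)
    (fun r hr => hcontr θ hθ' r hr.1) (fun u hu => ?_)
  calc ‖A θ - A u‖ ≤ L * |θ - u| := hLip θ hθ' u ⟨hs.trans hu.1, hu.2.trans ht.2⟩
    _ ≤ L * (θ - s) := by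
      rw [abs_of_nonneg (by linarith [hu.2])]
      gcongr
      exact hu.1

end Propagator

/-- The paper's `θ(i)`. -/
noncomputable def coarseTime (m n i : ℕ) : ℝ := ⌈(i : ℝ) * m / n⌉ / m

section CoarseTime

variable {m n i : ℕ}

theorem div_le_coarseTime (hm : 0 < m) : (i : ℝ) / n ≤ coarseTime m n i := by
  rw [coarseTime, le_div_iff₀ (by positivity), div_mul_eq_mul_div]
  exact Int.le_ceil _

theorem coarseTime_lt_div_add (hm : 0 < m) : coarseTime m n i < (i : ℝ) / n + 1 / m := by
  rw [coarseTime, div_lt_iff₀ (by positivity), add_mul, one_div_mul_cancel (by positivity),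
    div_mul_eq_mul_div]
  exact Int.ceil_lt_add_one _

theorem coarseTime_le_one (hin : i ≤ n) : coarseTime m n i ≤ 1 := by
  refine div_le_one_of_le₀ ?_ m.cast_nonneg
  have hi : (i : ℝ) / n ≤ 1 := div_le_one_of_le₀ (by exact_mod_cast hin) n.cast_nonneg
  exact_mod_cast Int.ceil_le.2 <| by
    push_cast
    rw [← div_mul_eq_mul_div]
    exact mul_le_of_le_one_left m.cast_nonneg hi

theorem coarseTime_sub_le (hm : 0 < m) (hmn : m ≤ n) :
    coarseTime m n i - ((i : ℝ) - 1) / n ≤ 2 / m := by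
  have h := coarseTime_lt_div_add (i := i) (n := n) hm
  have hnm : (1 : ℝ) / n ≤ 1 / m := one_div_le_one_div_of_le (by positivity) (by exact_mod_cast hmn)
  rw [sub_div, div_eq_mul_one_div 2]
  linarith

end CoarseTime

theorem coarse_graining_estimate_general
    {X : Type*} [NormedAddCommGroup X] [NormedSpace ℝ X] [CompleteSpace X]
    (L : ℝ) (A : ℝ → X →L[ℝ] X)
    (hLip : ∀ t ∈ Set.Icc (0 : ℝ) 1, ∀ s ∈ Set.Icc (0 : ℝ) 1, ‖A t - A s‖ ≤ L * |t - s|)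
    (hcontr : ∀ s ∈ Set.Icc (0 : ℝ) 1, ∀ r : ℝ, 0 ≤ r → ‖NormedSpace.exp (r • A s)‖ ≤ 1)
    (T : ℝ → ℝ → X →L[ℝ] X)
    (hTnorm : ∀ s t : ℝ, 0 ≤ s → s ≤ t → t ≤ 1 → ‖T t s‖ ≤ 1)
    (hTid : ∀ t ∈ Set.Icc (0 : ℝ) 1, T t t = 1)
    (hTderiv : ∀ t ∈ Set.Icc (0 : ℝ) 1, ∀ s ∈ Set.Icc (0 : ℝ) t,
      HasDerivWithinAt (fun u => T t u) (-(T t s * A s)) (Set.Icc (0 : ℝ) t) s)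
    (M : X →L[ℝ] X) (hM : ‖M‖ ≤ 1)
    (n m : ℕ) (hm : 1 ≤ m) (hmn : m ≤ n) :
    ‖timeOrderedProd (fun i => M * T ((i : ℝ) / n) (((i : ℝ) - 1) / n)) n -
      timeOrderedProd (fun i =>
        M * NormedSpace.exp ((n : ℝ)⁻¹ • A ((⌈(i : ℝ) * m / n⌉ : ℝ) / m))) n‖ ≤
      3 * L / m := by
  have hn : (0 : ℝ) < n := by exact_mod_cast hm.trans hmn
  have hL : 0 ≤ L := (norm_nonneg _).trans <| by
    simpa using hLip 1 ⟨zero_le_one, le_rfl⟩ 0 ⟨le_rfl, zero_le_one⟩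
  have hs : ∀ i : ℕ, 1 ≤ i → 0 ≤ ((i : ℝ) - 1) / n := fun i hi =>
    div_nonneg (sub_nonneg.2 (by exact_mod_cast hi)) hn.le
  have hst : ∀ i : ℕ, ((i : ℝ) - 1) / n ≤ i / n := fun i => by gcongr; linarith
  have hM_mul : ∀ a : X →L[ℝ] X, ‖a‖ ≤ 1 → ‖M * a‖ ≤ 1 := fun a ha =>
    (norm_mul_le _ _).trans (mul_le_one₀ hM (norm_nonneg _) ha)
  refine (norm_timeOrderedProd_sub_le (ε := 2 * L / m / n)
    (fun i hi hin => hM_mul _ (hTnorm _ _ (hs i hi) (hst i) ?_))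
    (fun i hi hin => hM_mul _ (hcontr _ ⟨?_, coarseTime_le_one hin⟩ _ (by positivity)))
    (fun i hi hin => ?_)).trans ?_
  · exact div_le_one_of_le₀ (by exact_mod_cast hin) hn.le
  · exact (hs i hi).trans ((hst i).trans (div_le_coarseTime hm))
  · have step := norm_propagator_sub_exp_le hL hLip hcontr hTnorm hTid hTderiv (hs i hi) (hst i)
      (div_le_coarseTime hm) (coarseTime_le_one hin)
    rw [show (i : ℝ) / n - (i - 1) / n = (n : ℝ)⁻¹ by ring] at step
    rw [← mul_sub]
    calc _ ≤ _ := (norm_mul_le _ _).trans (mul_le_of_le_one_left (norm_nonneg _) hM)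
      _ ≤ _ := step
      _ ≤ L * (2 / m) * (n : ℝ)⁻¹ := by gcongr; exact coarseTime_sub_le hm hmn
      _ = 2 * L / m / n := by ring
  · calc (n : ℝ) * (2 * L / m / n) = 2 * L / m := by field_simp
      _ ≤ 3 * L / m := by gcongr; norm_num

/-- **Coarse-graining estimate (Eq. (3Lm) of the paper).**
For an `L`-Lipschitz family of generators of contraction semigroups on `[0,1]`, a propagator
`T` and a contraction `M`, with `θ(i) = ⌈i m / n⌉ / m` for `n ≥ m ≥ 1`,
`‖∏_{i=1}^n M T_{[i/n,(i−1)/n]} − ∏_{i=1}^n M e^{L_{θ(i)}/n}‖ ≤ 3 L / m`. -/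
theorem coarse_graining_estimate
    {X : Type*} [NormedAddCommGroup X] [NormedSpace ℝ X] [CompleteSpace X]
    (L : ℝ) (A : ℝ → X →L[ℝ] X)
    (hLip : ∀ t ∈ Set.Icc (0 : ℝ) 1, ∀ s ∈ Set.Icc (0 : ℝ) 1, ‖A t - A s‖ ≤ L * |t - s|)
    (hcontr : ∀ s ∈ Set.Icc (0 : ℝ) 1, ∀ r : ℝ, 0 ≤ r → ‖NormedSpace.exp (r • A s)‖ ≤ 1)
    (T : ℝ → ℝ → X →L[ℝ] X)
    (hTnorm : ∀ s t : ℝ, 0 ≤ s → s ≤ t → t ≤ 1 → ‖T t s‖ ≤ 1)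
    (hTid : ∀ t ∈ Set.Icc (0 : ℝ) 1, T t t = 1)
    (hTcomp : ∀ s r t : ℝ, 0 ≤ s → s ≤ r → r ≤ t → t ≤ 1 → T t r * T r s = T t s)
    (hTderiv : ∀ t ∈ Set.Icc (0 : ℝ) 1, ∀ s ∈ Set.Icc (0 : ℝ) t,
      HasDerivWithinAt (fun u => T t u) (-(T t s * A s)) (Set.Icc (0 : ℝ) t) s)
    (M : X →L[ℝ] X) (hM : ‖M‖ ≤ 1)
    (n m : ℕ) (hm : 1 ≤ m) (hmn : m ≤ n) :
    ‖timeOrderedProd (fun i => M * T ((i : ℝ) / n) (((i : ℝ) - 1) / n)) n -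
      timeOrderedProd (fun i =>
        M * NormedSpace.exp ((n : ℝ)⁻¹ • A ((⌈(i : ℝ) * m / n⌉ : ℝ) / m))) n‖ ≤
      3 * L / m :=
  coarse_graining_estimate_general L A hLip hcontr T hTnorm hTid hTderiv M hM n m hm hmn
end

section
/- Let X be a Banach space, α ∈ (0,1], and t ↦ L_t an α-Hölder continuous map from [0,τ] into B(X) with Hölder constant L, such that ‖e^{r L_s}‖ ≤ 1 for all r ≥ 0 and s ∈ [0,τ]. Let T_{[t,s]} be a propagator for (L_t). Then for all s, t and δ ≥ 0 in the relevant range, ‖T_{[t+δ,t]} − e^{δ L_s}‖ ≤ L·(δ·|t−s|^α + δ^{1+α}/(1+α)). -/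
/-! `g u = T_{[t+δ,u]} e^{(u-t) L_s}` interpolates between `g t = T_{[t+δ,t]}` and
`g (t+δ) = e^{δ L_s}`. Its derivative `T_{[t+δ,u]} (L_s - L_u) e^{(u-t) L_s}` has norm at most
`‖L_s - L_u‖ ≤ L (|t-s|^α + (u-t)^α)`, since both outer factors are contractions and `x ↦ x^α`
is subadditive for `α ≤ 1`. The mean value inequality against the antiderivative of this bound
gives the estimate. -/

open Set

section Perturbation

variable {X : Type*} [NormedAddCommGroup X] [NormedSpace ℝ X] [CompleteSpace X]

theorem hasDerivWithinAt_mul_exp_smul {P : ℝ → X →L[ℝ] X} {A : ℝ → X →L[ℝ] X}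
    {B : X →L[ℝ] X} {s : Set ℝ} {t u : ℝ} (hP : HasDerivWithinAt P (-(P u * A u)) s u) :
    HasDerivWithinAt (fun v => P v * NormedSpace.exp ((v - t) • B))
      (P u * ((B - A u) * NormedSpace.exp ((u - t) • B))) s u := by
  have hE : HasDerivAt (fun v => NormedSpace.exp ((v - t) • B))
      (B * NormedSpace.exp ((u - t) • B)) u := by
    simpa using (hasDerivAt_exp_smul_const' (𝕂 := ℝ) B (u - t)).comp_sub_const u t
  exact (hP.mul hE.hasDerivWithinAt).congr_deriv (by noncomm_ring)

theorem norm_sub_exp_smul_le_of_hasDerivWithinAt_s17 {P A : ℝ → X →L[ℝ] X} {B : X →L[ℝ] X}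
    {t b : ℝ} {φ φ' : ℝ → ℝ} (htb : t ≤ b)
    (hP : ∀ u ∈ Icc t b, HasDerivWithinAt P (-(P u * A u)) (Icc t b) u) (hPb : P b = 1)
    (hPnorm : ∀ u ∈ Icc t b, ‖P u‖ ≤ 1)
    (hexp : ∀ r : ℝ, 0 ≤ r → ‖NormedSpace.exp (r • B)‖ ≤ 1)
    (hφ : ∀ u, HasDerivAt φ (φ' u) u) (hbound : ∀ u ∈ Ico t b, ‖B - A u‖ ≤ φ' u) :
    ‖P t - NormedSpace.exp ((b - t) • B)‖ ≤ φ b - φ t := by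
  set g : ℝ → X →L[ℝ] X := fun v => P v * NormedSpace.exp ((v - t) • B)
  have hg (u) (hu : u ∈ Icc t b) := hasDerivWithinAt_mul_exp_smul (t := t) (B := B) (hP u hu)
  have hg' (u) (hu : u ∈ Ico t b) :
      ‖P u * ((B - A u) * NormedSpace.exp ((u - t) • B))‖ ≤ φ' u :=
    calc _ ≤ ‖P u‖ * (‖B - A u‖ * ‖NormedSpace.exp ((u - t) • B)‖) :=
          (norm_mul_le _ _).trans (by gcongr; exact norm_mul_le _ _)
      _ ≤ 1 * (φ' u * 1) := by
          gcongr
          · exact hPnorm u (Ico_subset_Icc_self hu)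
          · exact (norm_nonneg _).trans (hbound u hu)
          · exact hbound u hu
          · exact hexp _ (sub_nonneg.2 hu.1)
      _ = φ' u := by ring
  have key := image_norm_le_of_norm_deriv_right_le_deriv_boundary (f := fun v => g v - g t)
    (B := fun v => φ v - φ t)
    (fun u hu => ((hg u hu).sub_const (g t)).continuousWithinAt)
    (fun u hu => ((hg u (Ico_subset_Icc_self hu)).sub_const (g t)).mono_of_mem_nhdsWithin
      (Icc_mem_nhdsGE_of_mem hu))
    (by simp) (fun u => (hφ u).sub_const (φ t)) hg' (right_mem_Icc.2 htb)
  simpa [g, hPb, norm_sub_rev] using key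

end Perturbation

theorem holder_const_nonneg {Y : Type*} [SeminormedAddCommGroup Y] {f : ℝ → Y} {L α x y : ℝ}
    (hxy : x ≠ y) (h : ‖f x - f y‖ ≤ L * |x - y| ^ α) : 0 ≤ L :=
  nonneg_of_mul_nonneg_left ((norm_nonneg _).trans h)
    (Real.rpow_pos_of_pos (abs_pos.2 (sub_ne_zero.2 hxy)) α)

theorem norm_sub_le_mul_rpow_add_rpow_of_le {Y : Type*} [SeminormedAddCommGroup Y] {f : ℝ → Y}
    {L α s t u : ℝ} (hα0 : 0 ≤ α) (hα1 : α ≤ 1) (hL : 0 ≤ L) (htu : t ≤ u)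
    (h : ‖f u - f s‖ ≤ L * |u - s| ^ α) :
    ‖f s - f u‖ ≤ L * (|t - s| ^ α + (u - t) ^ α) := by
  have hsplit : |u - s| ≤ |t - s| + (u - t) := by
    simpa [abs_of_nonneg (sub_nonneg.2 htu)] using abs_add_le (t - s) (u - t)
  calc ‖f s - f u‖ = ‖f u - f s‖ := norm_sub_rev _ _
    _ ≤ L * |u - s| ^ α := h
    _ ≤ L * (|t - s| + (u - t)) ^ α := by gcongr
    _ ≤ L * (|t - s| ^ α + (u - t) ^ α) := by
        gcongr
        exact Real.rpow_add_le_add_rpow (abs_nonneg _) (sub_nonneg.2 htu) hα0 hα1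

theorem hasDerivAt_sub_rpow_succ_div {α : ℝ} (hα : 0 ≤ α) (t u : ℝ) :
    HasDerivAt (fun v => (v - t) ^ (1 + α) / (1 + α)) ((u - t) ^ α) u := by
  have hα' : 1 + α ≠ 0 := by linarith
  have h := ((hasDerivAt_id' u).sub_const t).rpow_const (p := 1 + α) (Or.inr (by linarith))
  exact (h.div_const (1 + α)).congr_deriv (by rw [add_sub_cancel_left]; field_simp)

theorem propagator_piecewise_constant_approx_holder_general
    {X : Type*} [NormedAddCommGroup X] [NormedSpace ℝ X] [CompleteSpace X]
    (τ : ℝ)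
    (α : ℝ) (hα0 : 0 < α) (hα1 : α ≤ 1)
    (L : ℝ) (A : ℝ → X →L[ℝ] X)
    (hHolder : ∀ t ∈ Set.Icc (0 : ℝ) τ, ∀ s ∈ Set.Icc (0 : ℝ) τ, ‖A t - A s‖ ≤ L * |t - s| ^ α)
    (hcontr : ∀ s ∈ Set.Icc (0 : ℝ) τ, ∀ r : ℝ, 0 ≤ r → ‖NormedSpace.exp (r • A s)‖ ≤ 1)
    (T : ℝ → ℝ → X →L[ℝ] X)
    (hTnorm : ∀ s t : ℝ, 0 ≤ s → s ≤ t → t ≤ τ → ‖T t s‖ ≤ 1)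
    (hTid : ∀ t ∈ Set.Icc (0 : ℝ) τ, T t t = 1)
    (hTderiv : ∀ t ∈ Set.Icc (0 : ℝ) τ, ∀ s ∈ Set.Icc (0 : ℝ) t,
      HasDerivWithinAt (fun u => T t u) (-(T t s * A s)) (Set.Icc (0 : ℝ) t) s) :
    ∀ s ∈ Set.Icc (0 : ℝ) τ, ∀ t δ : ℝ, 0 ≤ t → 0 ≤ δ → t + δ ≤ τ →
      ‖T (t + δ) t - NormedSpace.exp (δ • A s)‖ ≤
        L * (δ * |t - s| ^ α + δ ^ (1 + α) / (1 + α)) := by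
  intro s hs t δ ht hδ htd
  have hb : t + δ ∈ Icc 0 τ := ⟨by linarith, htd⟩
  have hmem {u} (hu : u ∈ Icc t (t + δ)) : u ∈ Icc 0 τ := ⟨ht.trans hu.1, hu.2.trans htd⟩
  have hφ (u : ℝ) :
      HasDerivAt (fun v => L * ((v - t) * |t - s| ^ α + (v - t) ^ (1 + α) / (1 + α)))
        (L * (|t - s| ^ α + (u - t) ^ α)) u := by
    simpa using ((((hasDerivAt_id u).sub_const t).mul_const (|t - s| ^ α)).add
      (hasDerivAt_sub_rpow_succ_div hα0.le t u)).const_mul L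
  have hbound (u) (hu : u ∈ Ico t (t + δ)) : ‖A s - A u‖ ≤ L * (|t - s| ^ α + (u - t) ^ α) :=
    norm_sub_le_mul_rpow_add_rpow_of_le hα0.le hα1
      (holder_const_nonneg hu.2.ne (hHolder u (hmem (Ico_subset_Icc_self hu)) _ hb))
      hu.1 (hHolder u (hmem (Ico_subset_Icc_self hu)) s hs)
  have key := norm_sub_exp_smul_le_of_hasDerivWithinAt_s17 (le_add_of_nonneg_right hδ)
    (fun u hu => (hTderiv _ hb u ⟨ht.trans hu.1, hu.2⟩).mono (Icc_subset_Icc_left ht))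
    (hTid _ hb) (fun u hu => hTnorm u _ (ht.trans hu.1) hu.2 htd) (hcontr s hs) hφ hbound
  simpa [Real.zero_rpow (by linarith : 1 + α ≠ 0)] using key

/-- **Hölder version of the piecewise-constant approximation.**
If `t ↦ A t` is `α`-Hölder continuous with constant `L` on `[0, τ]`, takes values in generators
of contraction semigroups, and `T t s` is a propagator for this family, then
`‖T (t+δ) t − e^{δ A s}‖ ≤ L (δ |t − s|^α + δ^{1+α}/(1+α))`. -/
theorem propagator_piecewise_constant_approx_holder
    {X : Type*} [NormedAddCommGroup X] [NormedSpace ℝ X] [CompleteSpace X]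
    (τ : ℝ) (hτ : 0 ≤ τ)
    (α : ℝ) (hα0 : 0 < α) (hα1 : α ≤ 1)
    (L : ℝ) (A : ℝ → X →L[ℝ] X)
    (hHolder : ∀ t ∈ Set.Icc (0 : ℝ) τ, ∀ s ∈ Set.Icc (0 : ℝ) τ, ‖A t - A s‖ ≤ L * |t - s| ^ α)
    (hcontr : ∀ s ∈ Set.Icc (0 : ℝ) τ, ∀ r : ℝ, 0 ≤ r → ‖NormedSpace.exp (r • A s)‖ ≤ 1)
    (T : ℝ → ℝ → X →L[ℝ] X)
    (hTnorm : ∀ s t : ℝ, 0 ≤ s → s ≤ t → t ≤ τ → ‖T t s‖ ≤ 1)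
    (hTid : ∀ t ∈ Set.Icc (0 : ℝ) τ, T t t = 1)
    (hTcomp : ∀ s r t : ℝ, 0 ≤ s → s ≤ r → r ≤ t → t ≤ τ → T t r * T r s = T t s)
    (hTderiv : ∀ t ∈ Set.Icc (0 : ℝ) τ, ∀ s ∈ Set.Icc (0 : ℝ) t,
      HasDerivWithinAt (fun u => T t u) (-(T t s * A s)) (Set.Icc (0 : ℝ) t) s) :
    ∀ s ∈ Set.Icc (0 : ℝ) τ, ∀ t δ : ℝ, 0 ≤ t → 0 ≤ δ → t + δ ≤ τ →
      ‖T (t + δ) t - NormedSpace.exp (δ • A s)‖ ≤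
        L * (δ * |t - s| ^ α + δ ^ (1 + α) / (1 + α)) :=
  propagator_piecewise_constant_approx_holder_general τ α hα0 hα1 L A hHolder hcontr T hTnorm hTid
    hTderiv
end
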